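/- arXiv:1509.01770 — 3 statements merged into one kernel-verified Lean document; each statement's English description precedes it below -/
import Mathlib

section
/- For every tensor M ∈ ℝ^{n₁×⋯×n_K}, the dual norm of the overlapped trace norm satisfies ‖M‖_{overlap*} ≤ min_{1≤k≤K} ‖M_(k)‖_op, where M_(k) is the mode-k unfolding of M and ‖·‖_op is the matrix operator (spectral) norm. -/
/-!
Matrix Hölder inequality: expanding the Frobenius inner product `⟨A, B⟩` in an orthonormal
eigenbasis `(vⱼ)` of `AᴴA` gives `⟨A, B⟩ = Σⱼ ⟪A vⱼ, B vⱼ⟫ ≤ Σⱼ ‖A vⱼ‖ ‖B vⱼ‖ ≤ ‖A‖_tr ‖B‖_op`,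
since `‖A vⱼ‖` is the `j`-th singular value of `A`. The tensor inner product `⟨W, M⟩` is the
Frobenius inner product of the mode-`k` unfoldings for every `k`, and `‖W_(k)‖_tr ≤ ‖W‖_overlap`,
so `⟨W, M⟩ ≤ ‖M_(k)‖_op` whenever `‖W‖_overlap ≤ 1`.
-/

open MeasureTheory ProbabilityTheory Real BigOperators

noncomputable section

/-- Entrywise inner product of two tensors (functions). -/
def tinner {ι : Type*} [Fintype ι] (W M : ι → ℝ) : ℝ := ∑ i, W i * M i

/-- Frobenius (entrywise ℓ²) norm of a tensor. -/
def frobNorm {ι : Type*} [Fintype ι] (W : ι → ℝ) : ℝ := Real.sqrt (∑ i, (W i) ^ 2)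

/-- Trace norm (nuclear norm) of a real matrix: the sum of its singular values,
realized as the sum of square roots of the eigenvalues of `Aᴴ * A`. -/
def traceNorm {p q : Type*} [Fintype p] [Fintype q] [DecidableEq q]
    (A : Matrix p q ℝ) : ℝ :=
  ∑ j, Real.sqrt ((Matrix.isHermitian_conjTranspose_mul_self A).eigenvalues j)

/-- Operator (spectral) norm of a real matrix. -/
def opNorm {p q : Type*} [Fintype p] [Fintype q] [DecidableEq q]
    (A : Matrix p q ℝ) : ℝ :=
  ‖LinearMap.toContinuousLinearMap (Matrix.toEuclideanLin A)‖

/-- Mode-`k` unfolding of a `K`-way tensor: rows are indexed by the mode-`k` index and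
columns by the remaining indices. -/
def modeUnfold {K : ℕ} {n : Fin K → ℕ} (W : ((k : Fin K) → Fin (n k)) → ℝ) (k : Fin K) :
    Matrix (Fin (n k)) ((j : {j : Fin K // j ≠ k}) → Fin (n j.1)) ℝ :=
  Matrix.of fun a b =>
    W fun j => if h : j = k then Fin.cast (congrArg n h).symm a else b ⟨j, h⟩

/-- Overlapped trace norm: `‖W‖_overlap = Σ_k ‖W_(k)‖_tr`. -/
def overlapNorm {K : ℕ} {n : Fin K → ℕ} (W : ((k : Fin K) → Fin (n k)) → ℝ) : ℝ :=
  ∑ k, traceNorm (modeUnfold W k)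

/-- Scaled overlapped trace norm: `‖W‖_soverlap = Σ_k (1/√n_k)·‖W_(k)‖_tr`. -/
def soverlapNorm {K : ℕ} {n : Fin K → ℕ} (W : ((k : Fin K) → Fin (n k)) → ℝ) : ℝ :=
  ∑ k, (1 / Real.sqrt (n k)) * traceNorm (modeUnfold W k)

/-- Latent trace norm: infimum of `Σ_k ‖W^(k)_(k)‖_tr` over decompositions `W = Σ_k W^(k)`. -/
def latentNorm {K : ℕ} {n : Fin K → ℕ} (W : ((k : Fin K) → Fin (n k)) → ℝ) : ℝ :=
  sInf {x | ∃ Ws : Fin K → ((k : Fin K) → Fin (n k)) → ℝ,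
    (∑ k, Ws k) = W ∧ x = ∑ k, traceNorm (modeUnfold (Ws k) k)}

/-- Scaled latent trace norm: infimum of `Σ_k (1/√n_k)·‖W^(k)_(k)‖_tr` over decompositions
`W = Σ_k W^(k)`. -/
def scaledLatentNorm {K : ℕ} {n : Fin K → ℕ} (W : ((k : Fin K) → Fin (n k)) → ℝ) : ℝ :=
  sInf {x | ∃ Ws : Fin K → ((k : Fin K) → Fin (n k)) → ℝ,
    (∑ k, Ws k) = W ∧ x = ∑ k, (1 / Real.sqrt (n k)) * traceNorm (modeUnfold (Ws k) k)}

/-- Dual norm of a norm `nrm` on tensors: `‖M‖_* = sup {⟨W,M⟩ : nrm W ≤ 1}`. -/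
def dualNorm {ι : Type*} [Fintype ι] (nrm : (ι → ℝ) → ℝ) (M : ι → ℝ) : ℝ :=
  sSup {x | ∃ W, nrm W ≤ 1 ∧ x = tinner W M}

/-- The Rademacher distribution on `ℝ`: uniform on `{-1, 1}`. -/
def radem : Measure ℝ := (2 : ENNReal)⁻¹ • Measure.dirac (-1) + (2 : ENNReal)⁻¹ • Measure.dirac 1

/-- Expected risk `R(W) = E_{(X,y)∼μ} l(⟨W,X⟩, y)`. -/
def expRisk {ι Y : Type*} [Fintype ι] [MeasurableSpace Y]
    (μ : Measure ((ι → ℝ) × Y)) (l : ℝ → Y → ℝ) (W : ι → ℝ) : ℝ :=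
  ∫ p, l (tinner W p.1) p.2 ∂μ

/-- Empirical risk `R̂(W) = (1/m) Σ_i l(⟨W,X_i⟩, y_i)`. -/
def empRisk {ι Y : Type*} [Fintype ι] {m : ℕ}
    (l : ℝ → Y → ℝ) (X : Fin m → ι → ℝ) (y : Fin m → Y) (W : ι → ℝ) : ℝ :=
  (1 / (m : ℝ)) * ∑ i, l (tinner W (X i)) (y i)

end

open Module InnerProductSpace Matrix

theorem LinearMap.trace_adjoint_comp_eq_sum_inner {𝕜 E F ι : Type*} [RCLike 𝕜]
    [NormedAddCommGroup E] [InnerProductSpace 𝕜 E] [FiniteDimensional 𝕜 E]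
    [NormedAddCommGroup F] [InnerProductSpace 𝕜 F] [FiniteDimensional 𝕜 F] [Fintype ι]
    (T S : E →ₗ[𝕜] F) (b : OrthonormalBasis ι 𝕜 E) :
    trace 𝕜 E (T.adjoint ∘ₗ S) = ∑ i, inner 𝕜 (T (b i)) (S (b i)) := by
  simp [LinearMap.trace_eq_sum_inner _ b, LinearMap.adjoint_inner_right]

theorem Matrix.sum_inner_toEuclideanLin {p q : Type*} [Fintype p] [Fintype q] [DecidableEq q]
    (A B : Matrix p q ℝ) (v : OrthonormalBasis q ℝ (EuclideanSpace ℝ q)) :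
    ∑ j, inner ℝ (toEuclideanLin A (v j)) (toEuclideanLin B (v j)) = ∑ a, ∑ b, A a b * B a b := by
  rw [← LinearMap.trace_adjoint_comp_eq_sum_inner,
    LinearMap.trace_adjoint_comp_eq_sum_inner _ _ (EuclideanSpace.basisFun q ℝ), Finset.sum_comm]
  simp [PiLp.inner_apply, mul_comm]

theorem Matrix.norm_toEuclideanLin_eigenvectorBasis {𝕜 p q : Type*} [RCLike 𝕜]
    [Fintype p] [Fintype q] [DecidableEq q] (A : Matrix p q 𝕜) (j : q) :
    ‖toEuclideanLin A ((isHermitian_conjTranspose_mul_self A).eigenvectorBasis j)‖ =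
      √((isHermitian_conjTranspose_mul_self A).eigenvalues j) := by
  set hH := isHermitian_conjTranspose_mul_self A
  set v := hH.eigenvectorBasis j
  -- only after the `set`s, so that `v` keeps the given `DecidableEq q` instance
  classical
  have hv : (toEuclideanLin A).adjoint (toEuclideanLin A v) = (hH.eigenvalues j : 𝕜) • v := by
    rw [← toEuclideanLin_conjTranspose_eq_adjoint, ← LinearMap.comp_apply, ← toLpLin_mul_same]
    ext i
    rw [toLpLin_apply, PiLp.smul_apply, WithLp.ofLp_toLp,
      congrFun (hH.mulVec_eigenvectorBasis j) i, Pi.smul_apply]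
    exact RCLike.real_smul_eq_coe_smul _ _
  rw [← Real.sqrt_sq (norm_nonneg _), @norm_sq_eq_re_inner 𝕜, ← LinearMap.adjoint_inner_right, hv,
    inner_smul_right, inner_self_eq_norm_sq_to_K, hH.eigenvectorBasis.orthonormal.1 j]
  simp

section MatrixNorms

variable {p q : Type*} [Fintype p] [Fintype q] [DecidableEq q]

theorem traceNorm_nonneg (A : Matrix p q ℝ) : 0 ≤ traceNorm A :=
  Finset.sum_nonneg fun _ _ => Real.sqrt_nonneg _

theorem opNorm_nonneg (A : Matrix p q ℝ) : 0 ≤ opNorm A :=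
  norm_nonneg _

theorem norm_toEuclideanLin_apply_le_opNorm (A : Matrix p q ℝ) (x : EuclideanSpace ℝ q) :
    ‖toEuclideanLin A x‖ ≤ opNorm A * ‖x‖ :=
  (LinearMap.toContinuousLinearMap (toEuclideanLin A)).le_opNorm x

theorem sum_mul_le_traceNorm_mul_opNorm (A B : Matrix p q ℝ) :
    ∑ a, ∑ b, A a b * B a b ≤ traceNorm A * opNorm B := by
  set hH := isHermitian_conjTranspose_mul_self A
  rw [← sum_inner_toEuclideanLin A B hH.eigenvectorBasis, traceNorm, Finset.sum_mul]
  gcongr with j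
  calc inner ℝ (toEuclideanLin A (hH.eigenvectorBasis j)) (toEuclideanLin B (hH.eigenvectorBasis j))
      ≤ ‖toEuclideanLin A (hH.eigenvectorBasis j)‖ * ‖toEuclideanLin B (hH.eigenvectorBasis j)‖ :=
        real_inner_le_norm _ _
    _ ≤ √(hH.eigenvalues j) * opNorm B := by
        rw [norm_toEuclideanLin_eigenvectorBasis]
        gcongr
        simpa [hH.eigenvectorBasis.orthonormal.1 j] using
          norm_toEuclideanLin_apply_le_opNorm B (hH.eigenvectorBasis j)

end MatrixNorms

section Tensors

variable {K : ℕ} {n : Fin K → ℕ}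

theorem modeUnfold_apply (W : ((k : Fin K) → Fin (n k)) → ℝ) (k : Fin K)
    (a : Fin (n k)) (b : (j : {j : Fin K // j ≠ k}) → Fin (n j.1)) :
    modeUnfold W k a b = W ((Equiv.piSplitAt k fun j => Fin (n j)).symm (a, b)) := by
  refine congrArg W (funext fun j => ?_)
  by_cases h : j = k
  · subst h; simp [Equiv.piSplitAt]
  · simp [Equiv.piSplitAt, h]

theorem tinner_eq_sum_modeUnfold (W M : ((k : Fin K) → Fin (n k)) → ℝ) (k : Fin K) :
    tinner W M = ∑ a, ∑ b, modeUnfold W k a b * modeUnfold M k a b := by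
  simp only [modeUnfold_apply, tinner, ← Fintype.sum_prod_type']
  exact ((Equiv.piSplitAt k _).symm.sum_comp fun i => W i * M i).symm

theorem traceNorm_modeUnfold_le_overlapNorm (W : ((k : Fin K) → Fin (n k)) → ℝ) (k : Fin K) :
    traceNorm (modeUnfold W k) ≤ overlapNorm W :=
  Finset.single_le_sum (fun j _ => traceNorm_nonneg (modeUnfold W j)) (Finset.mem_univ k)

theorem tinner_le_opNorm_modeUnfold_of_overlapNorm_le_one {W : ((k : Fin K) → Fin (n k)) → ℝ}
    (hW : overlapNorm W ≤ 1) (M : ((k : Fin K) → Fin (n k)) → ℝ) (k : Fin K) :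
    tinner W M ≤ opNorm (modeUnfold M k) :=
  calc tinner W M
      = ∑ a, ∑ b, modeUnfold W k a b * modeUnfold M k a b := tinner_eq_sum_modeUnfold W M k
    _ ≤ traceNorm (modeUnfold W k) * opNorm (modeUnfold M k) :=
        sum_mul_le_traceNorm_mul_opNorm _ _
    _ ≤ opNorm (modeUnfold M k) :=
        mul_le_of_le_one_left (opNorm_nonneg _)
          ((traceNorm_modeUnfold_le_overlapNorm W k).trans hW)

end Tensors

theorem dualNorm_le {ι : Type*} [Fintype ι] {nrm : (ι → ℝ) → ℝ} {M : ι → ℝ} {c : ℝ} (hc : 0 ≤ c)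
    (h : ∀ W, nrm W ≤ 1 → tinner W M ≤ c) : dualNorm nrm M ≤ c :=
  Real.sSup_le (by rintro _ ⟨W, hW, rfl⟩; exact h W hW) hc

/-- For every tensor `M ∈ ℝ^{n₁×⋯×n_K}`, the dual norm of the overlapped trace
norm satisfies `‖M‖_{overlap*} ≤ min_k ‖M_(k)‖_op`. -/
theorem dualNorm_overlap_le_min_opNorm
    {K : ℕ} (hK : 0 < K) {n : Fin K → ℕ}
    (M : ((k : Fin K) → Fin (n k)) → ℝ) :
    dualNorm overlapNorm M
      ≤ Finset.univ.inf' ⟨⟨0, hK⟩, Finset.mem_univ _⟩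
          (fun k => opNorm (modeUnfold M k)) :=
  dualNorm_le (Finset.le_inf' _ _ fun _ _ => opNorm_nonneg _) fun _ hW =>
    Finset.le_inf' _ _ fun k _ => tinner_le_opNorm_modeUnfold_of_overlapNorm_le_one hW M k
end

section
/- (Rademacher contraction) Let A ⊆ ℝ^m be a nonempty bounded set, let φ₁,…,φ_m : ℝ → ℝ each be Λ-Lipschitz, and let σ₁,…,σ_m ∈ {−1,1} be i.i.d. Rademacher random variables. Then E_σ[ sup_{a ∈ A} Σ_{i=1}^m σ_i·φ_i(a_i) ] ≤ Λ · E_σ[ sup_{a ∈ A} Σ_{i=1}^m σ_i·a_i ]. -/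
open Real BigOperators

private lemma bddAbove_img {ι : Type*} {B : Set ι} {f : ι → ℝ} {M : ℝ}
    (h : ∀ x ∈ B, f x ≤ M) : BddAbove (f '' B) :=
  ⟨M, by rintro y ⟨x, hx, rfl⟩; exact h x hx⟩

private lemma core_contraction {ι : Type*} (B : Set ι) (hB : B.Nonempty) (g h : ι → ℝ)
    (Λ : ℝ) (φ : ℝ → ℝ) (hφ : ∀ s t, |φ s - φ t| ≤ Λ * |s - t|)
    (M : ℝ) (hM : ∀ x ∈ B, |g x| + |φ (h x)| + |Λ * h x| ≤ M) :
    sSup ((fun x => g x + φ (h x)) '' B) + sSup ((fun x => g x - φ (h x)) '' B)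
      ≤ sSup ((fun x => g x + Λ * h x) '' B) + sSup ((fun x => g x - Λ * h x) '' B) := by
  have hb3 : BddAbove ((fun x => g x + Λ * h x) '' B) := by
    refine bddAbove_img (M := M) fun x hx => ?_
    have := hM x hx
    have h1 := le_abs_self (g x); have h2 := le_abs_self (Λ * h x)
    have h3 := abs_nonneg (φ (h x)); linarith
  have hb4 : BddAbove ((fun x => g x - Λ * h x) '' B) := by
    refine bddAbove_img (M := M) fun x hx => ?_
    have := hM x hx
    have h1 := le_abs_self (g x); have h2 := neg_abs_le (Λ * h x)
    have h3 := abs_nonneg (φ (h x)); linarith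
  set R := sSup ((fun x => g x + Λ * h x) '' B) + sSup ((fun x => g x - Λ * h x) '' B) with hR
  have key : ∀ x ∈ B, ∀ y ∈ B, (g x + φ (h x)) + (g y - φ (h y)) ≤ R := by
    intro x hx y hy
    rcases le_total (h y) (h x) with hc | hc
    · have hlip : φ (h x) - φ (h y) ≤ Λ * h x - Λ * h y := by
        calc φ (h x) - φ (h y) ≤ |φ (h x) - φ (h y)| := le_abs_self _
          _ ≤ Λ * |h x - h y| := hφ _ _
          _ = Λ * h x - Λ * h y := by rw [abs_of_nonneg (by linarith)]; ring
      have e3 : g x + Λ * h x ≤ sSup ((fun x => g x + Λ * h x) '' B) :=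
        le_csSup hb3 ⟨x, hx, rfl⟩
      have e4 : g y - Λ * h y ≤ sSup ((fun x => g x - Λ * h x) '' B) :=
        le_csSup hb4 ⟨y, hy, rfl⟩
      rw [hR]; linarith
    · have hlip : φ (h x) - φ (h y) ≤ Λ * h y - Λ * h x := by
        calc φ (h x) - φ (h y) ≤ |φ (h x) - φ (h y)| := le_abs_self _
          _ ≤ Λ * |h x - h y| := hφ _ _
          _ = Λ * h y - Λ * h x := by
              rw [abs_of_nonpos (by linarith)]; ring
      have e3 : g y + Λ * h y ≤ sSup ((fun x => g x + Λ * h x) '' B) :=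
        le_csSup hb3 ⟨y, hy, rfl⟩
      have e4 : g x - Λ * h x ≤ sSup ((fun x => g x - Λ * h x) '' B) :=
        le_csSup hb4 ⟨x, hx, rfl⟩
      rw [hR]; linarith
  have h1 : sSup ((fun x => g x + φ (h x)) '' B) ≤ R - sSup ((fun x => g x - φ (h x)) '' B) := by
    refine csSup_le (hB.image _) ?_
    rintro _ ⟨x, hx, rfl⟩
    rw [le_sub_comm]
    refine csSup_le (hB.image _) ?_
    rintro _ ⟨y, hy, rfl⟩
    have := key x hx y hy
    dsimp only
    linarith
  linarith

private lemma sSup_mul_image {ι : Type*} (B : Set ι) (hB : B.Nonempty) (f : ι → ℝ)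
    (Λ : ℝ) (hΛ : 0 ≤ Λ) (M : ℝ) (hM : ∀ x ∈ B, |f x| ≤ M) :
    sSup ((fun x => Λ * f x) '' B) = Λ * sSup (f '' B) := by
  rcases hΛ.eq_or_lt with h0 | h0
  · rw [← h0]
    simp only [zero_mul]
    rw [Set.Nonempty.image_const hB 0, csSup_singleton]
  · have hbf : BddAbove (f '' B) := bddAbove_img fun x hx => (le_abs_self _).trans (hM x hx)
    have hbs : BddAbove ((fun x => Λ * f x) '' B) :=
      bddAbove_img (M := Λ * M) fun x hx =>
        mul_le_mul_of_nonneg_left ((le_abs_self _).trans (hM x hx)) hΛ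
    apply le_antisymm
    · refine csSup_le (hB.image _) ?_
      rintro _ ⟨x, hx, rfl⟩
      exact mul_le_mul_of_nonneg_left (le_csSup hbf ⟨x, hx, rfl⟩) hΛ
    · rw [mul_comm, ← le_div_iff₀ h0]
      refine csSup_le (hB.image _) ?_
      rintro _ ⟨x, hx, rfl⟩
      rw [le_div_iff₀ h0, mul_comm]
      exact le_csSup hbs ⟨x, hx, rfl⟩

/-- Rademacher contraction: for a nonempty bounded set `A ⊆ ℝ^m` and
`Λ`-Lipschitz functions `φ₁, …, φ_m : ℝ → ℝ`, with `σ` i.i.d. Rademacher variables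
(realized as uniform signs indexed by `s : Fin m → Bool`, sign `σᵢ = 1` if `s i` else `−1`),
`E_σ[sup_{a ∈ A} Σᵢ σᵢ φᵢ(aᵢ)] ≤ Λ · E_σ[sup_{a ∈ A} Σᵢ σᵢ aᵢ]`. -/
theorem rademacher_contraction (m : ℕ) (A : Set (Fin m → ℝ))
    (hA : A.Nonempty) (hAbd : Bornology.IsBounded A)
    (Λ : ℝ) (φ : Fin m → ℝ → ℝ)
    (hφ : ∀ i s t, |φ i s - φ i t| ≤ Λ * |s - t|) :
    (∑ s : Fin m → Bool,
        sSup ((fun a => ∑ i, (if s i then (1 : ℝ) else -1) * φ i (a i)) '' A)) / 2 ^ m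
      ≤ Λ * ((∑ s : Fin m → Bool,
        sSup ((fun a => ∑ i, (if s i then (1 : ℝ) else -1) * a i) '' A)) / 2 ^ m) := by
  classical
  rcases Nat.eq_zero_or_pos m with hm | hm
  · subst hm
    simp [Set.Nonempty.image_const hA]
  -- Λ ≥ 0
  have hΛ0 : 0 ≤ Λ := by
    have h := hφ ⟨0, hm⟩ 0 1
    rw [show (0 : ℝ) - 1 = -1 by ring, abs_neg, abs_one, mul_one] at h
    exact (abs_nonneg _).trans h
  -- coordinate bound
  obtain ⟨C₀, hC₀⟩ := isBounded_iff_forall_norm_le.mp hAbd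
  set C := max C₀ 0 with hCdef
  have hC0 : 0 ≤ C := le_max_right _ _
  have hC : ∀ a ∈ A, ∀ i, |a i| ≤ C := by
    intro a ha i
    calc |a i| = ‖a i‖ := rfl
      _ ≤ ‖a‖ := norm_le_pi_norm a i
      _ ≤ C₀ := hC₀ a ha
      _ ≤ C := le_max_left _ _
  set K : Fin m → ℝ := fun i => |φ i 0| + |Λ| * C with hKdef
  have hK0 : ∀ i, 0 ≤ K i := fun i =>
    add_nonneg (abs_nonneg _) (mul_nonneg (abs_nonneg _) hC0)
  have hKφ : ∀ i x, |x| ≤ C → |φ i x| ≤ K i := by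
    intro i x hx
    have h1 : |φ i x - φ i 0| ≤ Λ * |x| := by simpa using hφ i x 0
    have h2 : Λ * |x| ≤ |Λ| * C :=
      mul_le_mul (le_abs_self _) hx (abs_nonneg _) (abs_nonneg _)
    calc |φ i x| = |(φ i x - φ i 0) + φ i 0| := by ring_nf
      _ ≤ |φ i x - φ i 0| + |φ i 0| := abs_add_le _ _
      _ ≤ K i := by rw [hKdef]; dsimp; linarith
  have hKΛ : ∀ i x, |x| ≤ C → |Λ * x| ≤ K i := by
    intro i x hx
    rw [abs_mul]
    have : |Λ| * |x| ≤ |Λ| * C := mul_le_mul_of_nonneg_left hx (abs_nonneg _)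
    have := abs_nonneg (φ i 0)
    rw [hKdef]; dsimp; linarith
  -- interpolation
  set Ψ : ℕ → Fin m → ℝ → ℝ := fun k i x => if (i : ℕ) < k then Λ * x else φ i x with hΨdef
  have hΨK : ∀ k i x, |x| ≤ C → |Ψ k i x| ≤ K i := by
    intro k i x hx
    rw [hΨdef]; dsimp only
    split_ifs
    · exact hKΛ i x hx
    · exact hKφ i x hx
  set T : ℕ → ℝ := fun k => ∑ s : Fin m → Bool,
      sSup ((fun a => ∑ i, (if s i then (1 : ℝ) else -1) * Ψ k i (a i)) '' A) with hTdef
  -- the main step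
  have step : ∀ k, k < m → T k ≤ T (k + 1) := by
    intro k hk
    set κ : Fin m := ⟨k, hk⟩ with hκ
    set e := Equiv.funSplitAt κ Bool with he
    have hsum : ∀ F : (Fin m → Bool) → ℝ, ∑ s, F s =
        ∑ r : { j // j ≠ κ } → Bool, (F (e.symm (true, r)) + F (e.symm (false, r))) := by
      intro F
      rw [← Equiv.sum_comp e.symm F, Fintype.sum_prod_type, Finset.sum_comm]
      refine Finset.sum_congr rfl fun r _ => ?_
      simp [Fintype.univ_bool]
    have happ : ∀ b (r : { j // j ≠ κ } → Bool) (j : Fin m),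
        e.symm (b, r) j = if h : j = κ then b else r ⟨j, h⟩ := by
      intro b r j
      rw [he]
      simp [Equiv.funSplitAt, Equiv.piSplitAt]
    rw [hTdef]
    dsimp only
    rw [hsum, hsum]
    refine Finset.sum_le_sum fun r _ => ?_
    -- fixed partial sign pattern r
    set g : (Fin m → ℝ) → ℝ := fun a =>
      ∑ i ∈ Finset.univ.erase κ, (if (e.symm (true, r)) i then (1 : ℝ) else -1) * Ψ k i (a i)
      with hgdef
    have hgsame : ∀ b a, ∑ i ∈ Finset.univ.erase κ,
        (if (e.symm (b, r)) i then (1 : ℝ) else -1) * Ψ k i (a i) = g a := by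
      intro b a
      rw [hgdef]
      refine Finset.sum_congr rfl fun i hi => ?_
      have hiκ : i ≠ κ := (Finset.mem_erase.mp hi).1
      rw [happ, happ, dif_neg hiκ, dif_neg hiκ]
    have hgsame' : ∀ b a, ∑ i ∈ Finset.univ.erase κ,
        (if (e.symm (b, r)) i then (1 : ℝ) else -1) * Ψ (k + 1) i (a i) = g a := by
      intro b a
      rw [← hgsame b a]
      refine Finset.sum_congr rfl fun i hi => ?_
      have hiκ : i ≠ κ := (Finset.mem_erase.mp hi).1
      have hival : (i : ℕ) ≠ k := fun h => hiκ (Fin.ext h)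
      have : Ψ (k + 1) i = Ψ k i := by
        funext x
        rw [hΨdef]; dsimp only
        by_cases hik : (i : ℕ) < k
        · rw [if_pos (by omega), if_pos hik]
        · rw [if_neg (by omega), if_neg hik]
      rw [this]
    have hsplit : ∀ (ψ : Fin m → ℝ → ℝ) b (a : Fin m → ℝ),
        ∑ i, (if (e.symm (b, r)) i then (1 : ℝ) else -1) * ψ i (a i)
          = (∑ i ∈ Finset.univ.erase κ,
              (if (e.symm (b, r)) i then (1 : ℝ) else -1) * ψ i (a i))
            + (if b then (1 : ℝ) else -1) * ψ κ (a κ) := by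
      intro ψ b a
      rw [← Finset.add_sum_erase _ _ (Finset.mem_univ κ), happ, dif_pos rfl, add_comm]
    have hΨκk : Ψ k κ = φ κ := by
      rw [hΨdef]; dsimp only; rw [hκ]
      funext x; rw [if_neg (by simp)]
    have hΨκk1 : ∀ x, Ψ (k + 1) κ x = Λ * x := by
      intro x
      rw [hΨdef]; dsimp only; rw [hκ]
      rw [if_pos (by simp)]
    -- rewrite the four functions
    have f1 : (fun a => ∑ i, (if (e.symm (true, r)) i then (1 : ℝ) else -1) * Ψ k i (a i))
        = fun a => g a + φ κ (a κ) := by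
      funext a; rw [hsplit, hgsame, hΨκk]; simp
    have f2 : (fun a => ∑ i, (if (e.symm (false, r)) i then (1 : ℝ) else -1) * Ψ k i (a i))
        = fun a => g a - φ κ (a κ) := by
      funext a; rw [hsplit, hgsame, hΨκk]; simp; ring
    have f3 : (fun a => ∑ i, (if (e.symm (true, r)) i then (1 : ℝ) else -1) * Ψ (k + 1) i (a i))
        = fun a => g a + Λ * (a κ) := by
      funext a; rw [hsplit, hgsame', hΨκk1]; simp
    have f4 : (fun a => ∑ i, (if (e.symm (false, r)) i then (1 : ℝ) else -1) * Ψ (k + 1) i (a i))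
        = fun a => g a - Λ * (a κ) := by
      funext a; rw [hsplit, hgsame', hΨκk1]; simp; ring
    rw [f1, f2, f3, f4]
    refine core_contraction A hA g (fun a => a κ) Λ (φ κ) (hφ κ)
      ((∑ i, K i) + K κ + K κ) ?_
    intro a ha
    have hg : |g a| ≤ ∑ i, K i := by
      rw [hgdef]
      calc |∑ i ∈ Finset.univ.erase κ, (if (e.symm (true, r)) i then (1 : ℝ) else -1) * Ψ k i (a i)|
          ≤ ∑ i ∈ Finset.univ.erase κ,
            |(if (e.symm (true, r)) i then (1 : ℝ) else -1) * Ψ k i (a i)| :=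
            Finset.abs_sum_le_sum_abs _ _
        _ ≤ ∑ i ∈ Finset.univ.erase κ, K i := by
            refine Finset.sum_le_sum fun i _ => ?_
            rw [abs_mul]
            have h1 : |(if (e.symm (true, r)) i then (1 : ℝ) else -1)| = 1 := by
              split_ifs <;> simp
            rw [h1, one_mul]
            exact hΨK k i (a i) (hC a ha i)
        _ ≤ ∑ i, K i :=
            Finset.sum_le_sum_of_subset_of_nonneg (Finset.erase_subset _ _)
              (fun i _ _ => hK0 i)
    have h2 : |φ κ (a κ)| ≤ K κ := hKφ κ (a κ) (hC a ha κ)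
    have h3 : |Λ * (a κ)| ≤ K κ := hKΛ κ (a κ) (hC a ha κ)
    linarith
  -- chain the steps
  have mono : ∀ k, k ≤ m → T 0 ≤ T k := by
    intro k
    induction k with
    | zero => intro _; exact le_refl _
    | succ n ih => intro hn; exact (ih (Nat.le_of_succ_le hn)).trans (step n hn)
  have hchain := mono m le_rfl
  -- identify endpoints
  have hT0 : T 0 = ∑ s : Fin m → Bool,
      sSup ((fun a => ∑ i, (if s i then (1 : ℝ) else -1) * φ i (a i)) '' A) := by
    rw [hTdef]; simp [hΨdef]
  have hTm : T m = Λ * ∑ s : Fin m → Bool,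
      sSup ((fun a => ∑ i, (if s i then (1 : ℝ) else -1) * a i) '' A) := by
    rw [hTdef, Finset.mul_sum]
    refine Finset.sum_congr rfl fun s _ => ?_
    have e1 : (fun a : Fin m → ℝ => ∑ i, (if s i then (1 : ℝ) else -1) * Ψ m i (a i))
        = fun a => Λ * ∑ i, (if s i then (1 : ℝ) else -1) * a i := by
      funext a
      rw [Finset.mul_sum]
      refine Finset.sum_congr rfl fun i _ => ?_
      rw [hΨdef]; dsimp only; rw [if_pos i.isLt]; ring
    rw [e1]
    refine sSup_mul_image A hA _ Λ hΛ0 (m * C) ?_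
    intro a ha
    calc |∑ i, (if s i then (1 : ℝ) else -1) * a i|
        ≤ ∑ i, |(if s i then (1 : ℝ) else -1) * a i| := Finset.abs_sum_le_sum_abs _ _
      _ ≤ ∑ _i : Fin m, C := by
          refine Finset.sum_le_sum fun i _ => ?_
          rw [abs_mul]
          have h1 : |(if s i then (1 : ℝ) else -1)| = 1 := by split_ifs <;> simp
          rw [h1, one_mul]
          exact hC a ha i
      _ = m * C := by rw [Finset.sum_const, Finset.card_univ]; simp [mul_comm]
  have hpow : (0 : ℝ) < 2 ^ m := by positivity
  have hrhs : Λ * ((∑ s : Fin m → Bool,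
      sSup ((fun a => ∑ i, (if s i then (1 : ℝ) else -1) * a i) '' A)) / 2 ^ m)
      = T m / 2 ^ m := by rw [hTm]; ring
  rw [← hT0, hrhs]
  exact (div_le_div_iff_of_pos_right hpow).mpr hchain
end

section
/- Let A ∈ ℝ^{p×q} have singular value decomposition A = U·S·Vᵀ with singular values s₁,…,s_r on the diagonal of S, and let λ > 0. Then the function X ↦ (1/2)·‖X − A‖_F² + λ·‖X‖_tr over X ∈ ℝ^{p×q} has the unique minimizer U·max(S − λ, 0)·Vᵀ, i.e., the matrix obtained by replacing each singular value s_i of A by max(s_i − λ, 0) (singular value soft-thresholding). -/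
open Real BigOperators Matrix

noncomputable section

/-- Frobenius (entrywise ℓ²) norm of a matrix. -/
def frobNormM {p q : Type*} [Fintype p] [Fintype q] (A : Matrix p q ℝ) : ℝ :=
  Real.sqrt (∑ i, ∑ j, (A i j) ^ 2)

end

/-!
Write `X̂ = U·D·Vᵀ` with `D = max(S − λ, 0)`, so that `G = A − X̂ = U·min(S, λ)·Vᵀ`. Reading the
trace norm off a singular value decomposition `X = L·diag σ·Rᵀ` gives the duality
`tr(BᵀX) ≤ ‖B‖_op ‖X‖_tr`, and pairing `X̂` with the contraction `L·Rᵀ` of its own decomposition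
gives `‖X̂‖_tr ≤ tr D`. Hence `‖G‖_op ≤ λ` and `tr(GᵀX̂) = λ tr D ≥ λ‖X̂‖_tr`: `G` is a subgradient
of `λ‖·‖_tr` at `X̂`. Expanding the square then yields `F(X) ≥ F(X̂) + ½‖X − X̂‖_F²` for the
objective `F`, which gives minimality and uniqueness at once.
-/

open scoped Matrix.Norms.L2Operator

namespace Matrix

variable {m n k : Type*} [Fintype m] [Fintype n] [Fintype k]

lemma abs_apply_le_l2_opNorm [DecidableEq n] (M : Matrix m n ℝ) (i : m) (j : n) :
    |M i j| ≤ ‖M‖ := by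
  have h : |M i j| ≤ ‖(EuclideanSpace.equiv m ℝ).symm (M *ᵥ Pi.single j 1)‖ := by
    simpa using PiLp.norm_apply_le ((EuclideanSpace.equiv m ℝ).symm (M *ᵥ Pi.single j 1)) i
  simpa using h.trans (M.l2_opNorm_mulVec (EuclideanSpace.single j 1))

lemma l2_opNorm_transpose [DecidableEq m] [DecidableEq n] (A : Matrix m n ℝ) : ‖Aᵀ‖ = ‖A‖ := by
  rw [← conjTranspose_eq_transpose_of_trivial, l2_opNorm_conjTranspose]

lemma l2_opNorm_le_one_of_transpose_mul_self_eq_diagonal [DecidableEq n] {A : Matrix m n ℝ}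
    {c : n → ℝ} (hA : Aᵀ * A = diagonal c) (hc : ∀ j, c j ≤ 1) : ‖A‖ ≤ 1 := by
  have hc0 : ∀ j, 0 ≤ c j := fun j => by
    have := (posSemidef_conjTranspose_mul_self A).diag_nonneg (i := j)
    rwa [conjTranspose_eq_transpose_of_trivial, hA, diagonal_apply_eq] at this
  have hsq : ‖A‖ * ‖A‖ ≤ 1 := by
    rw [← l2_opNorm_conjTranspose_mul_self, conjTranspose_eq_transpose_of_trivial, hA,
      l2_opNorm_diagonal]
    exact (pi_norm_le_iff_of_nonneg zero_le_one).mpr fun j => by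
      rw [Real.norm_of_nonneg (hc0 j)]; exact hc j
  nlinarith [norm_nonneg A]

lemma l2_opNorm_le_one_of_transpose_mul_self_eq_one [DecidableEq n] {A : Matrix m n ℝ}
    (hA : Aᵀ * A = 1) : ‖A‖ ≤ 1 :=
  l2_opNorm_le_one_of_transpose_mul_self_eq_diagonal (hA.trans diagonal_one.symm) fun _ => le_rfl

lemma l2_opNorm_mul_diagonal_mul_transpose_le [DecidableEq n] [DecidableEq k]
    {L : Matrix m k ℝ} {R : Matrix n k ℝ} (hL : ‖L‖ ≤ 1) (hR : ‖R‖ ≤ 1) (s : k → ℝ) :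
    ‖L * diagonal s * Rᵀ‖ ≤ ‖s‖ :=
  calc ‖L * diagonal s * Rᵀ‖ ≤ ‖L‖ * ‖diagonal s‖ * ‖Rᵀ‖ :=
        (l2_opNorm_mul _ _).trans (by gcongr; exact l2_opNorm_mul _ _)
    _ ≤ 1 * ‖s‖ * 1 := by rw [l2_opNorm_diagonal, l2_opNorm_transpose]; gcongr
    _ = ‖s‖ := by ring

lemma mul_diagonal_eq_self_of_transpose_mul_self_eq_diagonal [DecidableEq n] {K : Matrix m n ℝ}
    {μ e : n → ℝ} (hK : Kᵀ * K = diagonal μ) (he : ∀ j, μ j ≠ 0 → e j = 1) :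
    K * diagonal e = K := by
  have hgram : (K * diagonal (1 - e))ᵀ * (K * diagonal (1 - e)) = 0 := by
    simp only [transpose_mul, diagonal_transpose, Matrix.mul_assoc, ← Matrix.mul_assoc Kᵀ, hK,
      diagonal_mul_diagonal]
    rw [← diagonal_zero]
    congr 1
    funext j
    by_cases hj : μ j = 0 <;> simp [hj, he]
  have hzero : K * diagonal (1 - e) = 0 :=
    conjTranspose_mul_self_eq_zero.mp (by rwa [conjTranspose_eq_transpose_of_trivial])
  rwa [show diagonal (1 - e) = 1 - diagonal e by simp [← diagonal_one'], Matrix.mul_sub,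
    Matrix.mul_one, sub_eq_zero, eq_comm] at hzero

lemma trace_transpose_mul_mul_diagonal_mul_transpose_le [DecidableEq n] [DecidableEq k]
    (B : Matrix m n ℝ) {L : Matrix m k ℝ} {R : Matrix n k ℝ} (hL : ‖L‖ ≤ 1) (hR : ‖R‖ ≤ 1)
    {s : k → ℝ} (hs : ∀ i, 0 ≤ s i) : trace (Bᵀ * (L * diagonal s * Rᵀ)) ≤ ‖B‖ * ∑ i, s i := by
  classical
  set M := Rᵀ * Bᵀ * L
  have hM : ‖M‖ ≤ ‖B‖ :=
    calc ‖M‖ ≤ ‖Rᵀ‖ * ‖Bᵀ‖ * ‖L‖ := (l2_opNorm_mul _ _).trans (by gcongr; exact l2_opNorm_mul _ _)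
      _ ≤ 1 * ‖B‖ * 1 := by rw [l2_opNorm_transpose, l2_opNorm_transpose]; gcongr
      _ = ‖B‖ := by ring
  calc trace (Bᵀ * (L * diagonal s * Rᵀ)) = ∑ i, M i i * s i := by
        rw [← Matrix.mul_assoc, ← Matrix.mul_assoc, trace_mul_cycle, ← Matrix.mul_assoc Rᵀ]
        simp only [trace, diag_apply, mul_diagonal, M]
    _ ≤ ∑ i, ‖B‖ * s i := by
        gcongr with i
        · exact hs i
        · exact (le_abs_self _).trans ((abs_apply_le_l2_opNorm M i i).trans hM)
    _ = ‖B‖ * ∑ i, s i := (Finset.mul_sum _ _ _).symm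

lemma trace_transpose_mul_eq_sum_mul [DecidableEq k] {U : Matrix m k ℝ} {V : Matrix n k ℝ}
    (hU : Uᵀ * U = 1) (hV : Vᵀ * V = 1) (a b : k → ℝ) :
    trace ((U * diagonal a * Vᵀ)ᵀ * (U * diagonal b * Vᵀ)) = ∑ i, a i * b i :=
  calc trace ((U * diagonal a * Vᵀ)ᵀ * (U * diagonal b * Vᵀ))
      = trace (diagonal a * (Uᵀ * U) * diagonal b * (Vᵀ * V)) := by
        simp only [transpose_mul, transpose_transpose, diagonal_transpose, Matrix.mul_assoc]
        rw [trace_mul_comm V]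
        simp only [Matrix.mul_assoc]
    _ = ∑ i, a i * b i := by simp [hU, hV, trace_diagonal]

end Matrix

section TraceNorm

variable {m n k : Type*} [Fintype m] [Fintype n] [Fintype k]

lemma traceNorm_nonneg_s14 [DecidableEq n] (X : Matrix m n ℝ) : 0 ≤ traceNorm X :=
  Finset.sum_nonneg fun _ _ => Real.sqrt_nonneg _

theorem exists_svd [DecidableEq n] (X : Matrix m n ℝ) :
    ∃ (L : Matrix m n ℝ) (σ : n → ℝ) (R : Matrix n n ℝ), ‖L‖ ≤ 1 ∧ ‖R‖ ≤ 1 ∧ (∀ j, 0 ≤ σ j) ∧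
      X = L * diagonal σ * Rᵀ ∧ Lᵀ * X * R = diagonal σ ∧ traceNorm X = ∑ j, σ j := by
  set h := isHermitian_conjTranspose_mul_self X
  set Q : Matrix n n ℝ := (h.eigenvectorUnitary : Matrix n n ℝ)
  have hQQ : Qᵀ * Q = 1 := by
    simpa [Q, star_eq_conjTranspose] using Unitary.coe_star_mul_self h.eigenvectorUnitary
  have hQQ' : Q * Qᵀ = 1 := by
    simpa [Q, star_eq_conjTranspose] using Unitary.coe_mul_star_self h.eigenvectorUnitary
  set σ : n → ℝ := fun j => √(h.eigenvalues j)
  have hK : (X * Q)ᵀ * (X * Q) = diagonal (σ * σ) := by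
    have hdiag := h.conjStarAlgAut_star_eigenvectorUnitary
    simp only [Unitary.conjStarAlgAut_star_apply, star_eq_conjTranspose,
      conjTranspose_eq_transpose_of_trivial] at hdiag
    have hμ : h.eigenvalues = σ * σ := funext fun j =>
      (Real.mul_self_sqrt (eigenvalues_conjTranspose_mul_self_nonneg X j)).symm
    rw [transpose_mul, Matrix.mul_assoc, ← Matrix.mul_assoc Xᵀ, ← Matrix.mul_assoc, ← hμ]
    exact hdiag
  -- `σ⁻¹` is `0` where `σ` vanishes; those columns of `X * Q` are zero, so `L` still recovers `X`.
  set L := X * Q * diagonal σ⁻¹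
  refine ⟨L, σ, Q, ?_, l2_opNorm_le_one_of_transpose_mul_self_eq_one hQQ,
    fun j => Real.sqrt_nonneg _, ?_, ?_, rfl⟩
  · refine l2_opNorm_le_one_of_transpose_mul_self_eq_diagonal (c := σ⁻¹ * (σ * σ * σ⁻¹)) ?_ ?_
    · rw [transpose_mul, diagonal_transpose, Matrix.mul_assoc, ← Matrix.mul_assoc (X * Q)ᵀ, hK,
        diagonal_mul_diagonal, diagonal_mul_diagonal]
      rfl
    · intro j
      by_cases hj : σ j = 0 <;> simp [hj]
  · have hsupp : X * Q * (diagonal σ⁻¹ * diagonal σ) = X * Q := by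
      rw [diagonal_mul_diagonal]
      exact mul_diagonal_eq_self_of_transpose_mul_self_eq_diagonal hK fun j hj =>
        inv_mul_cancel₀ (left_ne_zero_of_mul hj)
    change X = X * Q * diagonal σ⁻¹ * diagonal σ * Qᵀ
    rw [Matrix.mul_assoc (X * Q), hsupp, Matrix.mul_assoc, hQQ', Matrix.mul_one]
  · rw [transpose_mul, diagonal_transpose, Matrix.mul_assoc _ X Q, Matrix.mul_assoc, hK,
      diagonal_mul_diagonal]
    congr 1
    funext j
    exact (mul_assoc _ _ _).symm.trans (inv_mul_mul_self (σ j))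

theorem trace_transpose_mul_le_l2_opNorm_mul_traceNorm [DecidableEq n] (B X : Matrix m n ℝ) :
    trace (Bᵀ * X) ≤ ‖B‖ * traceNorm X := by
  obtain ⟨L, σ, R, hL, hR, hσ, hX, -, htn⟩ := exists_svd X
  rw [htn, hX]
  exact trace_transpose_mul_mul_diagonal_mul_transpose_le B hL hR hσ

theorem traceNorm_mul_diagonal_mul_transpose_le [DecidableEq n] [DecidableEq k]
    {L : Matrix m k ℝ} {R : Matrix n k ℝ} (hL : ‖L‖ ≤ 1) (hR : ‖R‖ ≤ 1) {s : k → ℝ}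
    (hs : ∀ i, 0 ≤ s i) : traceNorm (L * diagonal s * Rᵀ) ≤ ∑ i, s i := by
  set X := L * diagonal s * Rᵀ
  obtain ⟨L', σ, R', hL', hR', -, -, hσ, htn⟩ := exists_svd X
  have hP : ‖L' * R'ᵀ‖ ≤ 1 :=
    (l2_opNorm_mul _ _).trans (mul_le_one₀ hL' (norm_nonneg _) (by rwa [l2_opNorm_transpose]))
  calc traceNorm X = trace (L'ᵀ * X * R') := by rw [htn, hσ, trace_diagonal]
    _ = trace ((L' * R'ᵀ)ᵀ * X) := by rw [trace_mul_cycle, transpose_mul, transpose_transpose]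
    _ ≤ ‖L' * R'ᵀ‖ * ∑ i, s i := trace_transpose_mul_mul_diagonal_mul_transpose_le _ hL hR hs
    _ ≤ ∑ i, s i := mul_le_of_le_one_left (Finset.sum_nonneg fun i _ => hs i) hP

end TraceNorm

section Objective

variable {m n : Type*} [Fintype m] [Fintype n]

lemma frobNormM_sq (Y : Matrix m n ℝ) : frobNormM Y ^ 2 = trace (Yᵀ * Y) := by
  rw [frobNormM, Real.sq_sqrt (by positivity), trace, Finset.sum_comm]
  simp [mul_apply, sq]

lemma frobNormM_eq_zero_iff {Y : Matrix m n ℝ} : frobNormM Y = 0 ↔ Y = 0 := by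
  rw [← pow_eq_zero_iff two_ne_zero, frobNormM_sq, ← conjTranspose_eq_transpose_of_trivial,
    trace_conjTranspose_mul_self_eq_zero_iff]

lemma frobNormM_sub_sq (Y G : Matrix m n ℝ) :
    frobNormM (Y - G) ^ 2 = frobNormM Y ^ 2 - 2 * trace (Gᵀ * Y) + frobNormM G ^ 2 := by
  have hsymm : trace (Yᵀ * G) = trace (Gᵀ * Y) := by
    rw [← trace_transpose, transpose_mul, transpose_transpose]
  simp only [frobNormM_sq, transpose_sub, Matrix.sub_mul, Matrix.mul_sub, trace_sub, hsymm]
  ring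

noncomputable def proxObjective [DecidableEq n] (lam : ℝ) (A X : Matrix m n ℝ) : ℝ :=
  1 / 2 * frobNormM (X - A) ^ 2 + lam * traceNorm X

theorem proxObjective_add_le [DecidableEq n] {lam : ℝ} {A X₀ : Matrix m n ℝ}
    (hnorm : ‖A - X₀‖ ≤ lam) (hsub : lam * traceNorm X₀ ≤ trace ((A - X₀)ᵀ * X₀))
    (X : Matrix m n ℝ) :
    proxObjective lam A X₀ + 1 / 2 * frobNormM (X - X₀) ^ 2 ≤ proxObjective lam A X := by
  have hdual : trace ((A - X₀)ᵀ * X) ≤ lam * traceNorm X :=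
    (trace_transpose_mul_le_l2_opNorm_mul_traceNorm _ X).trans
      (mul_le_mul_of_nonneg_right hnorm (traceNorm_nonneg_s14 X))
  have hX : frobNormM (X - A) ^ 2
      = frobNormM (X - X₀) ^ 2 - 2 * trace ((A - X₀)ᵀ * (X - X₀)) + frobNormM (A - X₀) ^ 2 := by
    rw [← frobNormM_sub_sq, sub_sub_sub_cancel_right]
  have hX₀ : frobNormM (X₀ - A) ^ 2 = frobNormM (A - X₀) ^ 2 := by
    rw [frobNormM_sq, frobNormM_sq, ← neg_sub, transpose_neg, Matrix.neg_mul, Matrix.mul_neg,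
      neg_neg]
  rw [Matrix.mul_sub, trace_sub] at hX
  unfold proxObjective
  linarith

end Objective

noncomputable def softThreshold (lam s : ℝ) : ℝ := max (s - lam) 0

lemma softThreshold_nonneg (lam s : ℝ) : 0 ≤ softThreshold lam s := le_max_right _ _

lemma softThreshold_add_min (lam s : ℝ) : softThreshold lam s + min s lam = s := by
  rcases le_total s lam with h | h
  · rw [softThreshold, max_eq_right (by linarith), min_eq_left h]; ring
  · rw [softThreshold, max_eq_left (by linarith), min_eq_right h]; ring

lemma min_mul_softThreshold (lam s : ℝ) :
    min s lam * softThreshold lam s = lam * softThreshold lam s := by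
  rcases le_total s lam with h | h
  · rw [softThreshold, max_eq_right (by linarith)]; ring
  · rw [min_eq_right h]

section SoftThreshold

variable {m n k : Type*} [Fintype k] [DecidableEq k] {U : Matrix m k ℝ} {V : Matrix n k ℝ}

lemma mul_diagonal_mul_transpose_sub_softThreshold (s : k → ℝ) (lam : ℝ) :
    U * diagonal s * Vᵀ - U * diagonal (fun i => softThreshold lam (s i)) * Vᵀ
      = U * diagonal (fun i => min (s i) lam) * Vᵀ := by
  rw [← Matrix.sub_mul, ← Matrix.mul_sub, diagonal_sub]
  congr 3
  funext i
  exact (eq_sub_of_add_eq' (softThreshold_add_min lam (s i))).symm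

lemma l2_opNorm_sub_softThreshold_le [Fintype m] [Fintype n] [DecidableEq n]
    (hU : Uᵀ * U = 1) (hV : Vᵀ * V = 1) {s : k → ℝ} (hs : ∀ i, 0 ≤ s i) {lam : ℝ} (hlam : 0 ≤ lam) :
    ‖U * diagonal s * Vᵀ - U * diagonal (fun i => softThreshold lam (s i)) * Vᵀ‖ ≤ lam := by
  rw [mul_diagonal_mul_transpose_sub_softThreshold]
  refine (l2_opNorm_mul_diagonal_mul_transpose_le (l2_opNorm_le_one_of_transpose_mul_self_eq_one hU)
    (l2_opNorm_le_one_of_transpose_mul_self_eq_one hV) _).trans ?_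
  refine (pi_norm_le_iff_of_nonneg hlam).mpr fun i => ?_
  rw [Real.norm_of_nonneg (le_min (hs i) hlam)]
  exact min_le_right _ _

lemma mul_traceNorm_softThreshold_le [Fintype m] [Fintype n] [DecidableEq n]
    (hU : Uᵀ * U = 1) (hV : Vᵀ * V = 1) (s : k → ℝ) {lam : ℝ} (hlam : 0 ≤ lam) :
    lam * traceNorm (U * diagonal (fun i => softThreshold lam (s i)) * Vᵀ)
      ≤ trace ((U * diagonal s * Vᵀ - U * diagonal (fun i => softThreshold lam (s i)) * Vᵀ)ᵀ
          * (U * diagonal (fun i => softThreshold lam (s i)) * Vᵀ)) := by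
  rw [mul_diagonal_mul_transpose_sub_softThreshold, trace_transpose_mul_eq_sum_mul hU hV]
  simp only [min_mul_softThreshold, ← Finset.mul_sum]
  exact mul_le_mul_of_nonneg_left (traceNorm_mul_diagonal_mul_transpose_le
    (l2_opNorm_le_one_of_transpose_mul_self_eq_one hU)
    (l2_opNorm_le_one_of_transpose_mul_self_eq_one hV) fun i => softThreshold_nonneg lam (s i)) hlam

end SoftThreshold

/-- singular value soft-thresholding: if `A = U·S·Vᵀ` is an SVD of `A`
(`U`, `V` with orthonormal columns, `S` diagonal with nonnegative entries) and `λ > 0`, then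
`X ↦ (1/2)‖X − A‖_F² + λ‖X‖_tr` has `U·max(S − λ, 0)·Vᵀ` as its unique minimizer. -/
theorem soft_thresholding_unique_minimizer {p q r : ℕ}
    (A : Matrix (Fin p) (Fin q) ℝ) (U : Matrix (Fin p) (Fin r) ℝ)
    (S : Matrix (Fin r) (Fin r) ℝ) (V : Matrix (Fin q) (Fin r) ℝ)
    (hU : Uᵀ * U = 1) (hV : Vᵀ * V = 1)
    (hSdiag : ∀ i j, i ≠ j → S i j = 0) (hSnonneg : ∀ i, 0 ≤ S i i)
    (hA : A = U * S * Vᵀ) (lam : ℝ) (hlam : 0 < lam) :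
    (∀ X : Matrix (Fin p) (Fin q) ℝ,
        (1 / 2) * (frobNormM ((U * (Matrix.of fun i j =>
            if i = j then max (S i j - lam) 0 else 0) * Vᵀ) - A)) ^ 2
          + lam * traceNorm (U * (Matrix.of fun i j =>
            if i = j then max (S i j - lam) 0 else 0) * Vᵀ)
        ≤ (1 / 2) * (frobNormM (X - A)) ^ 2 + lam * traceNorm X) ∧
    (∀ X : Matrix (Fin p) (Fin q) ℝ,
        (1 / 2) * (frobNormM (X - A)) ^ 2 + lam * traceNorm X
          = (1 / 2) * (frobNormM ((U * (Matrix.of fun i j =>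
              if i = j then max (S i j - lam) 0 else 0) * Vᵀ) - A)) ^ 2
            + lam * traceNorm (U * (Matrix.of fun i j =>
              if i = j then max (S i j - lam) 0 else 0) * Vᵀ)
        → X = U * (Matrix.of fun i j => if i = j then max (S i j - lam) 0 else 0) * Vᵀ) := by
  have hA' : A = U * diagonal S.diag * Vᵀ := by
    rw [hA, IsDiag.diagonal_diag (show S.IsDiag from hSdiag)]
  have hD : (Matrix.of fun i j => if i = j then max (S i j - lam) 0 else 0)
      = diagonal fun i => softThreshold lam (S.diag i) := by
    ext i j
    by_cases hij : i = j
    · subst hij; simp [softThreshold]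
    · simp [hij]
  rw [hD, hA']
  set X₀ := U * diagonal (fun i => softThreshold lam (S.diag i)) * Vᵀ
  have hopt := proxObjective_add_le
    (l2_opNorm_sub_softThreshold_le hU hV (s := S.diag) hSnonneg hlam.le)
    (mul_traceNorm_softThreshold_le hU hV S.diag hlam.le)
  unfold proxObjective at hopt
  refine ⟨fun X => by linarith [hopt X, sq_nonneg (frobNormM (X - X₀))], fun X hX => ?_⟩
  have hsq : frobNormM (X - X₀) ^ 2 = 0 := le_antisymm (by linarith [hopt X]) (sq_nonneg _)
  exact sub_eq_zero.mp (frobNormM_eq_zero_iff.mp (pow_eq_zero_iff two_ne_zero |>.mp hsq))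
end
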